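/- arXiv:2506.20669 — 3 statements merged into one kernel-verified Lean document; each statement's English description precedes it below -/
import Mathlib

section
/- Let φ(g₁,g₂,h₁,h₂) be a relation on V(G)×V(G)×V(H)×V(H) defining a graph product G φ H on vertex set V(G)×V(H) (with distinct (g₁,h₁),(g₂,h₂) adjacent iff φ(g₁,g₂,h₁,h₂) holds), such that φ is invariant under applying any automorphism of G to the first two coordinates, and such that whenever h₁ = h₂ and g₁g₂ ∉ E(G), φ(g₁,g₂,h₁,h₂) fails. If G is opposable, then G φ H is opposable. -/
/-- An *opposition* of a simple graph `G`: an automorphism `f` of order two such that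
`f v ∉ N[v]` for every vertex `v` (i.e. `f v ≠ v` and `f v` is not adjacent to `v`). -/
def IsOpposition {V : Type*} (G : SimpleGraph V) (f : V → V) : Prop :=
  (∀ u v, G.Adj u v ↔ G.Adj (f u) (f v)) ∧ (∀ v, f (f v) = v) ∧
    ∀ v, f v ≠ v ∧ ¬ G.Adj v (f v)

/-- A graph is *opposable* if it admits an opposition. -/
def Opposable {V : Type*} (G : SimpleGraph V) : Prop := ∃ f, IsOpposition G f

/-- `f` is an opposition of the subgraph of `G` induced by the vertex set `S`. -/
def IsOppositionOn {V : Type*} (G : SimpleGraph V) (S : Set V) (f : V → V) : Prop :=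
  (∀ v ∈ S, f v ∈ S) ∧ (∀ u ∈ S, ∀ v ∈ S, (G.Adj u v ↔ G.Adj (f u) (f v))) ∧
    (∀ v ∈ S, f (f v) = v) ∧ ∀ v ∈ S, f v ≠ v ∧ ¬ G.Adj v (f v)

/-- A graph is *almost opposable* if deleting some admissible set `S`
(`u ∈ S ⊆ N[u]` for some vertex `u`) yields an opposable graph. -/
def AlmostOpposable {V : Type*} (G : SimpleGraph V) : Prop :=
  ∃ (u : V) (S : Set V), u ∈ S ∧ (∀ v ∈ S, v = u ∨ G.Adj u v) ∧
    ∃ f, IsOppositionOn G Sᶜ f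

/-! If `f` is an opposition of `G`, then `(g, h) ↦ (f g, h)` is an opposition of `G φ H`:
it is an automorphism because `φ` is invariant under the automorphism `f`, and `(g, h)` is not
adjacent to `(f g, h)` because the second coordinates agree while `g` and `f g` are not adjacent. -/

namespace IsOpposition

variable {V : Type*} {G : SimpleGraph V} {f : V → V}

theorem involutive (hf : IsOpposition G f) : Function.Involutive f := hf.2.1

theorem apply_ne (hf : IsOpposition G f) (v : V) : f v ≠ v := (hf.2.2 v).1

theorem not_adj_apply (hf : IsOpposition G f) (v : V) : ¬ G.Adj v (f v) := (hf.2.2 v).2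

theorem injective (hf : IsOpposition G f) : Function.Injective f := hf.involutive.injective

def toAut (hf : IsOpposition G f) : G ≃g G where
  toEquiv := hf.involutive.toPerm f
  map_rel_iff' := (hf.1 _ _).symm

end IsOpposition

theorem SimpleGraph.fromRel_adj_map_iff {V : Type*} {r : V → V → Prop} {F : V → V}
    (hF : Function.Injective F) (hr : ∀ x y, r (F x) (F y) ↔ r x y) (x y : V) :
    (SimpleGraph.fromRel r).Adj (F x) (F y) ↔ (SimpleGraph.fromRel r).Adj x y := by
  simp only [SimpleGraph.fromRel_adj, hF.ne_iff, hr]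

theorem graphProd_opposable_of_logic_general {α β : Type*} (G : SimpleGraph α)
    (φ : α → α → β → β → Prop)
    (hinv : ∀ (e : G ≃g G) g₁ g₂ h₁ h₂, φ (e g₁) (e g₂) h₁ h₂ ↔ φ g₁ g₂ h₁ h₂)
    (hcond : ∀ g₁ g₂ h₁ h₂, h₁ = h₂ → ¬ G.Adj g₁ g₂ → ¬ φ g₁ g₂ h₁ h₂)
    (hG : Opposable G) :
    Opposable (SimpleGraph.fromRel fun p q : α × β => φ p.1 q.1 p.2 q.2) := by
  obtain ⟨f, hf⟩ := hG
  refine ⟨Prod.map f id, fun p q => ?_, fun p => ?_, fun ⟨g, h⟩ => ⟨?_, ?_⟩⟩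
  · exact (SimpleGraph.fromRel_adj_map_iff (hf.injective.prodMap Function.injective_id)
      (fun p q => hinv hf.toAut p.1 q.1 p.2 q.2) p q).symm
  · exact Prod.ext (hf.involutive p.1) rfl
  · simpa using hf.apply_ne g
  · rw [SimpleGraph.fromRel_adj]
    rintro ⟨-, hφ | hφ⟩
    · exact hcond g (f g) h h rfl (hf.not_adj_apply g) hφ
    · exact hcond (f g) g h h rfl (fun hadj => hf.not_adj_apply g hadj.symm) hφ

theorem graphProd_opposable_of_logic {α β : Type*} (G : SimpleGraph α) (H : SimpleGraph β)
    (φ : α → α → β → β → Prop)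
    (hsymm : ∀ g₁ g₂ h₁ h₂, φ g₁ g₂ h₁ h₂ → φ g₂ g₁ h₂ h₁)
    (hinv : ∀ (e : G ≃g G) g₁ g₂ h₁ h₂, φ (e g₁) (e g₂) h₁ h₂ ↔ φ g₁ g₂ h₁ h₂)
    (hcond : ∀ g₁ g₂ h₁ h₂, h₁ = h₂ → ¬ G.Adj g₁ g₂ → ¬ φ g₁ g₂ h₁ h₂)
    (hG : Opposable G) :
    Opposable (SimpleGraph.fromRel fun p q : α × β => φ p.1 q.1 p.2 q.2) :=
  graphProd_opposable_of_logic_general G φ hinv hcond hG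
end

section
/- If G is a graph possessing a vertex u and a set S with u ∈ S ⊆ N[u] such that the induced subgraph G − S is opposable, and H is a graph containing a universal vertex, then the strong product G ⊠ H is almost opposable. -/
/-- The strong product of two simple graphs. -/
def strongProd {α β : Type*} (G : SimpleGraph α) (H : SimpleGraph β) : SimpleGraph (α × β) :=
  SimpleGraph.fromRel fun p q =>
    (p.1 = q.1 ∨ G.Adj p.1 q.1) ∧ (p.2 = q.2 ∨ H.Adj p.2 q.2)

section StrongProd

variable {α β : Type*} {G : SimpleGraph α} {H : SimpleGraph β}

lemma strongProd_adj {p q : α × β} :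
    (strongProd G H).Adj p q ↔
      p ≠ q ∧ (p.1 = q.1 ∨ G.Adj p.1 q.1) ∧ (p.2 = q.2 ∨ H.Adj p.2 q.2) := by
  simp only [strongProd, SimpleGraph.fromRel_adj, and_congr_right_iff]
  intro _
  constructor
  · rintro (h | ⟨h₁, h₂⟩)
    · exact h
    · exact ⟨h₁.imp Eq.symm G.adj_symm, h₂.imp Eq.symm H.adj_symm⟩
  · exact Or.inl

lemma strongProd_eq_or_adj_of_mem_prod {u : α} {w : β} {S : Set α} {T : Set β}
    (hS : ∀ v ∈ S, v = u ∨ G.Adj u v) (hT : ∀ y ∈ T, y = w ∨ H.Adj w y) :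
    ∀ p ∈ S ×ˢ T, p = (u, w) ∨ (strongProd G H).Adj (u, w) p := by
  rintro ⟨a, b⟩ ⟨ha, hb⟩
  by_cases hab : (a, b) = (u, w)
  · exact Or.inl hab
  · exact Or.inr (strongProd_adj.2
      ⟨Ne.symm hab, (hS a ha).imp Eq.symm id, (hT b hb).imp Eq.symm id⟩)

lemma IsOppositionOn.strongProd_map_id {T : Set α} {g : α → α} (hg : IsOppositionOn G T g) :
    IsOppositionOn (strongProd G H) (Prod.fst ⁻¹' T) (Prod.map g id) := by
  obtain ⟨hmaps, hadj, hinv, hopp⟩ := hg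
  refine ⟨fun p hp => hmaps p.1 hp, ?_, fun p hp => Prod.ext (hinv p.1 hp) rfl, ?_⟩
  · rintro ⟨a, b⟩ ha ⟨a', b'⟩ ha'
    have hinj : g a = g a' ↔ a = a' :=
      ⟨fun h => by rw [← hinv a ha, ← hinv a' ha', h], congrArg g⟩
    simp only [strongProd_adj, Prod.map, id, ne_eq, Prod.mk.injEq, hinj, ← hadj a ha a' ha']
  · rintro ⟨a, b⟩ ha
    refine ⟨fun h => (hopp a ha).1 (congrArg Prod.fst h), ?_⟩
    intro h
    obtain ⟨-, h | h, -⟩ := strongProd_adj.1 h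
    · exact (hopp a ha).1 h.symm
    · exact (hopp a ha).2 h

end StrongProd

theorem strongProd_universal_almostOpposable {α β : Type*}
    (G : SimpleGraph α) (H : SimpleGraph β)
    (u : α) (S : Set α) (hu : u ∈ S) (hS : ∀ v ∈ S, v = u ∨ G.Adj u v)
    (hop : ∃ f, IsOppositionOn G Sᶜ f)
    (w : β) (hw : ∀ y, y ≠ w → H.Adj w y) :
    AlmostOpposable (strongProd G H) := by
  obtain ⟨g, hg⟩ := hop
  have hw' : ∀ y ∈ (Set.univ : Set β), y = w ∨ H.Adj w y :=
    fun y _ => (em (y = w)).imp_right (hw y)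
  refine ⟨(u, w), S ×ˢ Set.univ, ⟨hu, Set.mem_univ w⟩,
    strongProd_eq_or_adj_of_mem_prod hS hw', Prod.map g id, ?_⟩
  rw [Set.prod_univ, ← Set.preimage_compl]
  exact hg.strongProd_map_id
end

section
/- For k ≥ 1 and positive integers n₁,…,n_k, the Cartesian grid □_{i=1}^k P_{n_i} is opposable if at least two of the n_i are even, and is almost opposable if at most one of the n_i is even. -/
/-- The path on `n` vertices. -/
def pathG (n : ℕ) : SimpleGraph (Fin n) :=
  SimpleGraph.fromRel fun i j => (i : ℕ) + 1 = (j : ℕ)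

/-- The Cartesian product of the paths `P_{n 0}, …, P_{n (k-1)}`. -/
def cartGrid (k : ℕ) (n : Fin k → ℕ) : SimpleGraph (∀ i, Fin (n i)) :=
  SimpleGraph.fromRel fun p q =>
    ∃ i, (pathG (n i)).Adj (p i) (q i) ∧ ∀ j, j ≠ i → p j = q j

/-!
Reversing every coordinate, `p ↦ (n i - 1 - p i)ᵢ`, is an involutive automorphism of the grid,
and on a path of even length it has no fixed point. With two even sides, `p` and its image
therefore differ in two coordinates, so they are neither equal nor adjacent. Otherwise the only
vertices fixed by the reversal or sent to a neighbour are the centre `(⌊n i / 2⌋)ᵢ` and its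
image, which are equal or adjacent; deleting these two leaves an opposable graph.
-/

lemma pathG_adj {m : ℕ} {a b : Fin m} :
    (pathG m).Adj a b ↔ (a : ℕ) + 1 = b ∨ (b : ℕ) + 1 = a := by
  rw [pathG, SimpleGraph.fromRel_adj, and_iff_right_iff_imp]
  rintro h rfl
  omega

lemma cartGrid_adj {k : ℕ} {n : Fin k → ℕ} {p q : ∀ i, Fin (n i)} :
    (cartGrid k n).Adj p q ↔ ∃ i, (pathG (n i)).Adj (p i) (q i) ∧ ∀ j, j ≠ i → p j = q j := by
  rw [cartGrid, SimpleGraph.fromRel_adj]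
  constructor
  · rintro ⟨-, h | ⟨i, hi, hj⟩⟩
    · exact h
    · exact ⟨i, hi.symm, fun j hji => (hj j hji).symm⟩
  · rintro ⟨i, hi, hj⟩
    refine ⟨fun hpq => ?_, Or.inl ⟨i, hi, hj⟩⟩
    subst hpq
    exact (pathG (n i)).irrefl hi

lemma Fin.rev_eq_self_iff {m : ℕ} {a : Fin m} : a.rev = a ↔ 2 * (a : ℕ) + 1 = m := by
  rw [Fin.ext_iff, Fin.val_rev]
  omega

lemma Fin.rev_ne_self_of_even {m : ℕ} (hm : Even m) (a : Fin m) : a.rev ≠ a := by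
  obtain ⟨c, hc⟩ := hm
  rw [Ne, Fin.rev_eq_self_iff]
  omega

lemma pathG_adj_rev_self_iff {m : ℕ} {a : Fin m} :
    (pathG m).Adj a a.rev ↔ 2 * (a : ℕ) + 2 = m ∨ 2 * (a : ℕ) = m := by
  rw [pathG_adj, Fin.val_rev]
  omega

lemma pathG_rev_adj_rev_iff {m : ℕ} {a b : Fin m} :
    (pathG m).Adj a.rev b.rev ↔ (pathG m).Adj a b := by
  rw [pathG_adj, pathG_adj, Fin.val_rev, Fin.val_rev]
  omega

/-- The admissible set deleted is `{u, f u}`. -/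
theorem almostOpposable_of_involutive {V : Type*} {G : SimpleGraph V} {f : V → V}
    (hf : Function.Involutive f) (hadj : ∀ v w, G.Adj v w ↔ G.Adj (f v) (f w)) (u : V)
    (hu : f u = u ∨ G.Adj u (f u)) (hbad : ∀ v, f v = v ∨ G.Adj v (f v) → v = u ∨ f v = u) :
    AlmostOpposable G := by
  refine ⟨u, {u, f u}, Or.inl rfl, ?_, f, ?_, fun v _ w _ => hadj v w, fun v _ => hf v, ?_⟩
  · rintro v (rfl | rfl)
    · exact Or.inl rfl
    · exact hu
  · intro v hv hfv
    rcases hfv with hfv | hfv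
    · exact hv (Or.inr (hf.eq_iff.1 hfv))
    · exact hv (Or.inl (hf.injective hfv))
  · intro v hv
    have hgood : ¬ (f v = v ∨ G.Adj v (f v)) := by
      intro hfix
      rcases hbad v hfix with rfl | hfv
      · exact hv (Or.inl rfl)
      · exact hv (Or.inr (hf.eq_iff.1 hfv))
    exact not_or.1 hgood

section Grid

variable {k : ℕ} {n : Fin k → ℕ}

def gridRev (p : ∀ i, Fin (n i)) : ∀ i, Fin (n i) := fun i => (p i).rev

lemma gridRev_involutive : Function.Involutive (gridRev (n := n)) :=
  fun p => funext fun i => Fin.rev_rev (p i)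

lemma cartGrid_adj_iff_gridRev_adj (p q : ∀ i, Fin (n i)) :
    (cartGrid k n).Adj p q ↔ (cartGrid k n).Adj (gridRev p) (gridRev q) := by
  simp only [cartGrid_adj, gridRev, pathG_rev_adj_rev_iff, Fin.rev_inj]

theorem gridRev_isOpposition (h : ∃ i j, i ≠ j ∧ Even (n i) ∧ Even (n j)) :
    IsOpposition (cartGrid k n) gridRev := by
  obtain ⟨i, j, hij, hi, hj⟩ := h
  refine ⟨cartGrid_adj_iff_gridRev_adj, gridRev_involutive, fun p => ⟨?_, ?_⟩⟩
  · exact fun h => Fin.rev_ne_self_of_even hi (p i) (congrFun h i)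
  · rw [cartGrid_adj]
    rintro ⟨l, -, hl⟩
    rcases eq_or_ne i l with rfl | hil
    · exact Fin.rev_ne_self_of_even hj (p j) (hl j hij.symm).symm
    · exact Fin.rev_ne_self_of_even hi (p i) (hl i hil).symm

/-- For an even side `n i / 2` is the upper of its two middle values. -/
def gridCenter (hn : ∀ i, 0 < n i) : ∀ i, Fin (n i) := fun i => ⟨n i / 2, by have := hn i; omega⟩

lemma eq_gridCenter_iff (hn : ∀ i, 0 < n i) {p : ∀ i, Fin (n i)} :
    p = gridCenter hn ↔ ∀ i, (p i : ℕ) = n i / 2 := by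
  simp only [funext_iff, Fin.ext_iff, gridCenter]

lemma gridRev_gridCenter_eq_or_adj (hn : ∀ i, 0 < n i)
    (hodd : ∀ i j, Even (n i) → Even (n j) → i = j) :
    gridRev (gridCenter hn) = gridCenter hn ∨
      (cartGrid k n).Adj (gridCenter hn) (gridRev (gridCenter hn)) := by
  have hfix : ∀ j, ¬ Even (n j) → (gridCenter hn j).rev = gridCenter hn j := fun j hj => by
    rw [Nat.not_even_iff_odd] at hj
    obtain ⟨c, hc⟩ := hj
    rw [Fin.rev_eq_self_iff]
    show 2 * (n j / 2) + 1 = n j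
    omega
  by_cases hev : ∃ i, Even (n i)
  · obtain ⟨i, c, hc⟩ := hev
    refine Or.inr (cartGrid_adj.2
      ⟨i, ?_, fun j hji => (hfix j fun hj => hji (hodd j i hj ⟨c, hc⟩)).symm⟩)
    refine pathG_adj_rev_self_iff.2 (Or.inr ?_)
    show 2 * (n i / 2) = n i
    omega
  · rw [not_exists] at hev
    exact Or.inl (funext fun j => hfix j (hev j))

lemma eq_gridCenter_of_gridRev_eq_or_adj (hn : ∀ i, 0 < n i) (p : ∀ i, Fin (n i))
    (h : gridRev p = p ∨ (cartGrid k n).Adj p (gridRev p)) :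
    p = gridCenter hn ∨ gridRev p = gridCenter hn := by
  rw [eq_gridCenter_iff, eq_gridCenter_iff]
  rcases h with h | h
  · exact Or.inl fun i => by have := Fin.rev_eq_self_iff.1 (congrFun h i); omega
  obtain ⟨i, hi, hj⟩ := cartGrid_adj.1 h
  have hj' : ∀ j, j ≠ i → 2 * (p j : ℕ) + 1 = n j := fun j hji =>
    Fin.rev_eq_self_iff.1 (hj j hji).symm
  have hrev : ∀ j, ((gridRev p j : Fin (n j)) : ℕ) = n j - (p j + 1) := fun j => Fin.val_rev _
  rcases pathG_adj_rev_self_iff.1 hi with h | h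
  · refine Or.inr fun j => ?_
    rcases eq_or_ne j i with rfl | hji
    · rw [hrev]; omega
    · rw [hrev]; have := hj' j hji; omega
  · refine Or.inl fun j => ?_
    rcases eq_or_ne j i with rfl | hji
    · omega
    · have := hj' j hji; omega

end Grid

theorem cartGrid_opposable_or_almostOpposable_general (k : ℕ) (n : Fin k → ℕ)
    (hn : ∀ i, 1 ≤ n i) :
    ((∃ i j, i ≠ j ∧ Even (n i) ∧ Even (n j)) → Opposable (cartGrid k n)) ∧
      ((∀ i j, Even (n i) → Even (n j) → i = j) → AlmostOpposable (cartGrid k n)) :=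
  ⟨fun h => ⟨gridRev, gridRev_isOpposition h⟩, fun hodd =>
    almostOpposable_of_involutive gridRev_involutive cartGrid_adj_iff_gridRev_adj (gridCenter hn)
      (gridRev_gridCenter_eq_or_adj hn hodd) (eq_gridCenter_of_gridRev_eq_or_adj hn)⟩

theorem cartGrid_opposable_or_almostOpposable (k : ℕ) (hk : 1 ≤ k) (n : Fin k → ℕ)
    (hn : ∀ i, 1 ≤ n i) :
    ((∃ i j, i ≠ j ∧ Even (n i) ∧ Even (n j)) → Opposable (cartGrid k n)) ∧
      ((∀ i j, Even (n i) → Even (n j) → i = j) → AlmostOpposable (cartGrid k n)) :=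
  cartGrid_opposable_or_almostOpposable_general k n hn
end
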